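/- Fix 0 < ε < 1/4 and let S_ε = π(U) ⊂ 𝕋² with U as in Definition 3.5. Define ψ : 𝕋² → [0,2) by ψ(θ) = π⁻¹(θ)₁ + π⁻¹(θ)₂. If θ_x, θ_y, θ_z ∈ S_ε satisfy 2θ_y = θ_x + θ_z, and d = (π⁻¹(θ_z) - π⁻¹(θ_x))/2, then either 2ψ(θ_y) ≥ ψ(θ_x) + ψ(θ_z) + 1/2, or ψ(θ_y) = ψ(θ_x) + (d₁ + d₂). -/
import Mathlib

instance : Fact ((0:ℝ) < 1) := ⟨zero_lt_one⟩

/-- The set `U₁` from Definition 3.5 of the paper. -/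
def U1 : Set (ℝ × ℝ) :=
  {v | (v ∈ Set.Ico (0:ℝ) (1/2) ×ˢ Set.Ico (1/2:ℝ) 1 ∪
        Set.Ico (1/2:ℝ) 1 ×ˢ Set.Ico (0:ℝ) (1/2)) ∧ v.1 + v.2 < 3/4}

/-- The set `U₂` from Definition 3.5 of the paper. -/
def U2 (ε : ℝ) : Set (ℝ × ℝ) :=
  {v | v ∈ Set.Ico (0:ℝ) (1/2) ×ˢ Set.Ico (0:ℝ) 1 ∧ 3/4 + ε < v.1 + v.2 ∧ v.1 + v.2 < 5/4}

/-- The projection `ℝ² → 𝕋²`. -/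
noncomputable def torusProj (v : ℝ × ℝ) : AddCircle (1:ℝ) × AddCircle (1:ℝ) :=
  ((v.1 : AddCircle (1:ℝ)), (v.2 : AddCircle (1:ℝ)))

/-- The unique representative in `[0,1)` of a point of `ℝ/ℤ`. -/
noncomputable def rep (θ : AddCircle (1:ℝ)) : ℝ := (AddCircle.equivIco 1 0 θ : ℝ)

/-- The sum map `ψ : 𝕋² → [0,2)`. -/
noncomputable def psi (θ : AddCircle (1:ℝ) × AddCircle (1:ℝ)) : ℝ := rep θ.1 + rep θ.2

lemma rep_coe {u : ℝ} (h : u ∈ Set.Ico (0:ℝ) 1) : rep ((u : ℝ) : AddCircle (1:ℝ)) = u := by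
  have := AddCircle.coe_equivIco_mk_apply (1:ℝ) u
  simp only [rep]
  rw [this, div_one, mul_one, Int.fract_eq_self]
  exact ⟨h.1, h.2⟩

lemma int_of_eq {a b : ℝ} (h : (a : AddCircle (1:ℝ)) = (b : ℝ)) : ∃ m : ℤ, a - b = m := by
  have : ((a - b : ℝ) : AddCircle (1:ℝ)) = 0 := by
    rw [AddCircle.coe_sub, h, sub_self]
  rw [AddCircle.coe_eq_zero_iff] at this
  obtain ⟨n, hn⟩ := this
  exact ⟨n, by simpa using hn.symm⟩

lemma Ubounds {ε : ℝ} (hε : 0 < ε) {v : ℝ × ℝ} (hv : v ∈ U1 ∪ U2 ε) :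
    (0 ≤ v.1 ∧ v.1 < 1 ∧ 0 ≤ v.2 ∧ v.2 < 1) ∧ 1/2 ≤ v.1 + v.2 ∧ v.1 + v.2 < 5/4 ∧
      (3/4 ≤ v.1 + v.2 → v.1 < 1/2) ∧ (v.1 + v.2 ≤ 3/4 → 1/2 ≤ v.1 ∨ 1/2 ≤ v.2) := by
  rcases hv with ⟨hmem, hsum⟩ | ⟨⟨h1, h2⟩, hs1, hs2⟩
  · rcases hmem with ⟨⟨a1, a2⟩, ⟨b1, b2⟩⟩ | ⟨⟨a1, a2⟩, ⟨b1, b2⟩⟩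
    · exact ⟨⟨a1, by linarith, by linarith, b2⟩, by linarith, by linarith,
        fun h => by linarith, fun _ => Or.inr b1⟩
    · exact ⟨⟨by linarith, a2, b1, by linarith⟩, by linarith, by linarith,
        fun h => by linarith, fun _ => Or.inl a1⟩
  · exact ⟨⟨h1.1, by linarith [h1.2], h2.1, h2.2⟩, by linarith, hs2,
      fun _ => h1.2, fun h => by linarith⟩

theorem freiman_one (ε : ℝ) (hε : 0 < ε) (hε' : ε < 1/4)
    (θx θy θz : AddCircle (1:ℝ) × AddCircle (1:ℝ))
    (hθx : θx ∈ torusProj '' (U1 ∪ U2 ε)) (hθy : θy ∈ torusProj '' (U1 ∪ U2 ε))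
    (hθz : θz ∈ torusProj '' (U1 ∪ U2 ε))
    (hap : 2 • θy = θx + θz)
    (d : ℝ × ℝ)
    (hd : d = (1/2 : ℝ) • ((rep θz.1, rep θz.2) - (rep θx.1, rep θx.2))) :
    2 * psi θy ≥ psi θx + psi θz + 1/2 ∨ psi θy = psi θx + (d.1 + d.2) := by
  obtain ⟨x, hxU, hx⟩ := hθx
  obtain ⟨y, hyU, hy⟩ := hθy
  obtain ⟨z, hzU, hz⟩ := hθz
  obtain ⟨⟨x10, x11, x20, x21⟩, xs1, xs2, xs3, _⟩ := Ubounds hε hxU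
  obtain ⟨⟨y10, y11, y20, y21⟩, ys1, ys2, _, ys4⟩ := Ubounds hε hyU
  obtain ⟨⟨z10, z11, z20, z21⟩, zs1, zs2, zs3, _⟩ := Ubounds hε hzU
  have hx1 : θx.1 = ((x.1 : ℝ) : AddCircle (1:ℝ)) := by rw [← hx]; rfl
  have hx2 : θx.2 = ((x.2 : ℝ) : AddCircle (1:ℝ)) := by rw [← hx]; rfl
  have hy1 : θy.1 = ((y.1 : ℝ) : AddCircle (1:ℝ)) := by rw [← hy]; rfl
  have hy2 : θy.2 = ((y.2 : ℝ) : AddCircle (1:ℝ)) := by rw [← hy]; rfl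
  have hz1 : θz.1 = ((z.1 : ℝ) : AddCircle (1:ℝ)) := by rw [← hz]; rfl
  have hz2 : θz.2 = ((z.2 : ℝ) : AddCircle (1:ℝ)) := by rw [← hz]; rfl
  have rx1 : rep θx.1 = x.1 := by rw [hx1]; exact rep_coe ⟨x10, x11⟩
  have rx2 : rep θx.2 = x.2 := by rw [hx2]; exact rep_coe ⟨x20, x21⟩
  have ry1 : rep θy.1 = y.1 := by rw [hy1]; exact rep_coe ⟨y10, y11⟩
  have ry2 : rep θy.2 = y.2 := by rw [hy2]; exact rep_coe ⟨y20, y21⟩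
  have rz1 : rep θz.1 = z.1 := by rw [hz1]; exact rep_coe ⟨z10, z11⟩
  have rz2 : rep θz.2 = z.2 := by rw [hz2]; exact rep_coe ⟨z20, z21⟩
  have hap1 : 2 • θy.1 = θx.1 + θz.1 := by
    have := congrArg Prod.fst hap; simpa using this
  have hap2 : 2 • θy.2 = θx.2 + θz.2 := by
    have := congrArg Prod.snd hap; simpa using this
  rw [hy1, hx1, hz1, two_nsmul, ← AddCircle.coe_add, ← AddCircle.coe_add] at hap1
  rw [hy2, hx2, hz2, two_nsmul, ← AddCircle.coe_add, ← AddCircle.coe_add] at hap2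
  obtain ⟨m1, hm1⟩ := int_of_eq hap1
  obtain ⟨m2, hm2⟩ := int_of_eq hap2
  have hm1b : -2 < (m1:ℝ) ∧ (m1:ℝ) < 2 := by constructor <;> [linarith [hm1.symm.le]; linarith [hm1.le]]
  have hm2b : -2 < (m2:ℝ) ∧ (m2:ℝ) < 2 := by constructor <;> [linarith [hm2.symm.le]; linarith [hm2.le]]
  have hm1i : m1 = -1 ∨ m1 = 0 ∨ m1 = 1 := by
    have l : (-2:ℤ) < m1 := by exact_mod_cast hm1b.1
    have r : m1 < 2 := by exact_mod_cast hm1b.2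
    omega
  have hm2i : m2 = -1 ∨ m2 = 0 ∨ m2 = 1 := by
    have l : (-2:ℤ) < m2 := by exact_mod_cast hm2b.1
    have r : m2 < 2 := by exact_mod_cast hm2b.2
    omega
  have hpsix : psi θx = x.1 + x.2 := by rw [psi, rx1, rx2]
  have hpsiy : psi θy = y.1 + y.2 := by rw [psi, ry1, ry2]
  have hpsiz : psi θz = z.1 + z.2 := by rw [psi, rz1, rz2]
  have hdsum : d.1 + d.2 = (z.1 + z.2 - (x.1 + x.2)) / 2 := by
    rw [hd]; simp [rx1, rx2, rz1, rz2]; ring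
  rw [hpsix, hpsiy, hpsiz, hdsum]
  -- key equations
  have e1 : y.1 + y.1 - (x.1 + z.1) = (m1:ℝ) := hm1
  have e2 : y.2 + y.2 - (x.2 + z.2) = (m2:ℝ) := hm2
  rcases hm1i with h1 | h1 | h1 <;> rcases hm2i with h2 | h2 | h2 <;>
    rw [h1] at e1 <;> rw [h2] at e2 <;> push_cast at e1 e2
  -- (-1,-1)
  · exfalso; linarith
  -- (-1,0): x1+z1 = 2y1+1 ≥ 1 but x1,z1 < 1/2
  · exfalso
    have hx12 : x.1 < 1/2 := xs3 (by linarith)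
    have hz12 : z.1 < 1/2 := zs3 (by linarith)
    linarith
  -- (-1,1)
  · right; linarith
  -- (0,-1)
  · exfalso
    have hx12 : x.1 < 1/2 := xs3 (by linarith)
    have hz12 : z.1 < 1/2 := zs3 (by linarith)
    have hy12 : y.1 < 1/2 := by linarith
    rcases ys4 (by linarith) with h | h
    · linarith
    · linarith
  -- (0,0)
  · right; linarith
  -- (0,1)
  · left; linarith
  -- (1,-1)
  · right; linarith
  -- (1,0)
  · left; linarith
  -- (1,1)
  · left; linarith
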